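/- Let H : E → ℝ be smooth, β a closed smooth 1-form on E, f : E → ℝ smooth, and ζ a smooth vector field on E such that L_ζ(α_H + β) = df. Then the Noether integral J(x) = (α_H + β)(x)(ζ(x)) − f(x) is also preserved under the flow of ζ: dJ(x)(ζ(x)) = 0 for all x ∈ E. -/

import Mathlib

noncomputable section
open scoped ContDiff

/-- The extended phase space `E = ℝ × ℝⁿ × ℝⁿ`, with points `x = (t, q, p)`. -/
abbrev EE (n : ℕ) : Type := ℝ × (Fin n → ℝ) × (Fin n → ℝ)

/-- The Poincaré–Cartan 1-form `α_H = p dq − H dt`: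
`α_H(x)(τ̂, ξ̂, η̂) = ∑ i, pᵢ ξ̂ᵢ − H(x) τ̂`. -/
def pcForm {n : ℕ} (H : EE n → ℝ) (x : EE n) : EE n →L[ℝ] ℝ :=
  (∑ i, x.2.2 i • ((ContinuousLinearMap.proj i).comp
      ((ContinuousLinearMap.fst ℝ (Fin n → ℝ) (Fin n → ℝ)).comp
        (ContinuousLinearMap.snd ℝ ℝ ((Fin n → ℝ) × (Fin n → ℝ))))))
    - H x • ContinuousLinearMap.fst ℝ ℝ ((Fin n → ℝ) × (Fin n → ℝ))

/-- The vector field `Z_H(x) = (1, ∂H/∂p(x), −∂H/∂q(x))` of Hamilton's equations. -/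
def ZH {n : ℕ} (H : EE n → ℝ) (x : EE n) : EE n :=
  (1, fun i => fderiv ℝ H x (0, 0, Pi.single i 1),
      fun i => - fderiv ℝ H x (0, Pi.single i 1, 0))

/-- The Lie derivative of a 1-form `α` along a vector field `ζ`:
`(L_ζ α)(x)(v) = (Dα(x)(ζ(x)))(v) + α(x)(Dζ(x)(v))`. -/
def lieDeriv {n : ℕ} (ζ : EE n → EE n) (α : EE n → (EE n →L[ℝ] ℝ)) (x : EE n) :
    EE n →L[ℝ] ℝ :=
  fderiv ℝ α x (ζ x) + (α x).comp (fderiv ℝ ζ x)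

/-- The exterior derivative of a 1-form:
`dα(x)(u,v) = (Dα(x)u)(v) − (Dα(x)v)(u)`. -/
def extDeriv1 {n : ℕ} (α : EE n → (EE n →L[ℝ] ℝ)) (x u v : EE n) : ℝ :=
  fderiv ℝ α x u v - fderiv ℝ α x v u

/-! By the product rule, `D(α(ζ))(ζ) = (Dα(ζ))(ζ) + α(Dζ(ζ)) = (L_ζ α)(ζ)` for `α = α_H + β`,
so `dJ(ζ) = (L_ζ α − df)(ζ) = 0`. -/

theorem contDiff_pcForm {n : ℕ} {k : WithTop ℕ∞} {H : EE n → ℝ} (hH : ContDiff ℝ k H) :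
    ContDiff ℝ k (pcForm H) := by
  refine ContDiff.sub (ContDiff.sum fun i _ => ?_) (hH.smul contDiff_const)
  exact ((ContinuousLinearMap.proj (R := ℝ) (φ := fun _ : Fin n => ℝ) i).contDiff.comp
    (contDiff_snd.comp contDiff_snd)).smul contDiff_const

theorem lieDeriv_apply_self {n : ℕ} {ζ : EE n → EE n} {α : EE n → (EE n →L[ℝ] ℝ)} {x : EE n}
    (hα : DifferentiableAt ℝ α x) (hζ : DifferentiableAt ℝ ζ x) :
    lieDeriv ζ α x (ζ x) = fderiv ℝ (fun y => α y (ζ y)) x (ζ x) := by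
  rw [fderiv_clm_apply hα hζ, lieDeriv, add_comm]
  rfl

theorem noether_integral_preserved_by_symmetry {n : ℕ}
    (H f : EE n → ℝ) (β : EE n → (EE n →L[ℝ] ℝ)) (ζ : EE n → EE n)
    (hH : ContDiff ℝ ∞ H) (hβ : ContDiff ℝ ∞ β) (hf : ContDiff ℝ ∞ f)
    (hζ : ContDiff ℝ ∞ ζ)
    (hsym : ∀ x, lieDeriv ζ (fun y => pcForm H y + β y) x = fderiv ℝ f x)
    (J : EE n → ℝ) (hJ : ∀ x, J x = (pcForm H x + β x) (ζ x) - f x) :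
    ∀ x, fderiv ℝ J x (ζ x) = 0 := by
  intro x
  have hα : DifferentiableAt ℝ (fun y => pcForm H y + β y) x :=
    ((contDiff_pcForm hH).add hβ).differentiable (by simp) x
  have hζx : DifferentiableAt ℝ ζ x := hζ.differentiable (by simp) x
  rw [funext hJ, fderiv_fun_sub (hα.clm_apply hζx) (hf.differentiable (by simp) x),
    sub_apply, ← lieDeriv_apply_self hα hζx, hsym, sub_self]
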